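/- arXiv:2201.09718 — 3 statements merged into one kernel-verified Lean document; each statement's English description precedes it below -/
import Mathlib

section
/- Suppose 2j − k ≤ m ≤ j−1 and let M be the centre of an (m,j)-star S of size r (r distinct j-sets pairwise intersecting exactly in the common m-set M). If S ⊆ A_t in the (r, A_0)-infection process on K_n^k (with n sufficiently large), then every j-set containing M is infected at time t+1, i.e., M* ⊆ A_{t+1}. -/
open Finset

open Classical in
noncomputable def bootStep (V : Finset ℕ) (E : Finset (Finset ℕ)) (j r : ℕ)
    (A : Finset (Finset ℕ)) : Finset (Finset ℕ) :=
  A ∪ (V.powersetCard j).filter (fun J =>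
    ∃ K : Fin r → Finset ℕ, ∃ Js : Fin r → Finset ℕ,
      Function.Injective K ∧ Function.Injective Js ∧
      ∀ i : Fin r, K i ∈ E ∧ Js i ∈ A ∧ Js i ∪ J ⊆ K i)

/-- The infected sets at time `t` of the bootstrap percolation process on a hypergraph
with vertex set `V`, edge set `E`, evolving on `j`-sets with infection threshold `r`. -/
noncomputable def bootProc (V : Finset ℕ) (E : Finset (Finset ℕ)) (j r : ℕ)
    (A0 : Finset (Finset ℕ)) (t : ℕ) : Finset (Finset ℕ) :=
  (bootStep V E j r)^[t] A0

/-- The process on the complete `k`-uniform hypergraph on `V`. -/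
noncomputable def compProc (V : Finset ℕ) (k j r : ℕ)
    (A0 : Finset (Finset ℕ)) (t : ℕ) : Finset (Finset ℕ) :=
  bootProc V (V.powersetCard k) j r A0 t

/-- `A0` is contagious: eventually all `j`-sets of `V` are infected. -/
def Percolates (V : Finset ℕ) (k j r : ℕ) (A0 : Finset (Finset ℕ)) : Prop :=
  ∃ t, compProc V k j r A0 t = V.powersetCard j

/-- `ℓ_n(k,j,r)`: minimum size of a contagious `j`-configuration in `K_n^k`. -/
noncomputable def ellMin (n k j r : ℕ) : ℕ :=
  sInf {m | ∃ A0 : Finset (Finset ℕ), A0 ⊆ (range n).powersetCard j ∧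
    A0.card = m ∧ Percolates (range n) k j r A0}

open Classical in
/-- The extension set of a `(k-1)`-set `J` with respect to configuration `C` in the
complete `k`-uniform hypergraph on `V`. -/
noncomputable def extSet (V : Finset ℕ) (k : ℕ) (C : Finset (Finset ℕ))
    (J : Finset ℕ) : Finset ℕ :=
  V.filter (fun v => ∃ J' ∈ C, J' ≠ J ∧ J' ⊆ insert v J ∧ insert v J ∈ V.powersetCard k)

/-- An (m,j)-star with centre M: distinct j-sets every two of which intersect
precisely in the common m-set M. -/
def IsStar (m j : ℕ) (M : Finset ℕ) (S : Finset (Finset ℕ)) : Prop :=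
  M.card = m ∧ (∀ J ∈ S, J.card = j ∧ M ⊆ J) ∧
  ∀ J1 ∈ S, ∀ J2 ∈ S, J1 ≠ J2 → J1 ∩ J2 = M


/-
A `j`-set `J ⊇ M` meets each petal `Jᵢ` of the star in at least `M`, so `|Jᵢ ∪ J| ≤ 2j - m ≤ k`,
and the sets `Jᵢ ∪ J` are pairwise distinct. A union of size exactly `k` is its own unique
`k`-superset; a smaller one has at least `n - k + 1 ≥ r` supersets of size `k`. Hall's theorem
then yields distinct `k`-sets `Kᵢ ⊇ Jᵢ ∪ J`, which is what infects `J` in one step.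
-/

theorem Nat.add_one_le_choose_add (b : ℕ) {a : ℕ} (ha : 1 ≤ a) : b + 1 ≤ (b + a).choose a :=
  calc b + 1 = (b + 1).choose b := (Nat.choose_succ_self_right b).symm
    _ ≤ (b + a).choose b := Nat.choose_le_choose b (by omega)
    _ = (b + a).choose a := Nat.choose_symm_add

section Supersets

variable {α : Type*} [DecidableEq α]

theorem Finset.card_add_one_sub_le_card_supersets {U V : Finset α} {k : ℕ} (hUV : U ⊆ V)
    (hUk : #U < k) : #V + 1 - k ≤ #{K ∈ V.powersetCard k | U ⊆ K} := by
  by_cases hkV : #V < k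
  · omega
  have hdisj : ∀ X ∈ (V \ U).powersetCard (k - #U), Disjoint U X := fun X hX =>
    disjoint_of_subset_right (mem_powersetCard.mp hX).1 disjoint_sdiff
  have hunion : Set.InjOn (U ∪ ·) ((V \ U).powersetCard (k - #U) : Set (Finset α)) := by
    intro X hX Y hY hXY
    rw [← union_sdiff_cancel_left (hdisj X hX), ← union_sdiff_cancel_left (hdisj Y hY)]
    exact congrArg (· \ U) hXY
  have himage : ((V \ U).powersetCard (k - #U)).image (U ∪ ·) ⊆
      {K ∈ V.powersetCard k | U ⊆ K} := by
    intro K hK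
    obtain ⟨X, hX, rfl⟩ := mem_image.mp hK
    obtain ⟨hXV, hXcard⟩ := mem_powersetCard.mp hX
    refine mem_filter.mpr ⟨mem_powersetCard.mpr ⟨union_subset hUV ?_, ?_⟩, subset_union_left⟩
    · exact hXV.trans sdiff_subset
    · rw [card_union_of_disjoint (hdisj X hX), hXcard]
      omega
  calc #V + 1 - k = (#V - k) + 1 := by omega
    _ ≤ (#V - k + (k - #U)).choose (k - #U) := Nat.add_one_le_choose_add _ (by omega)
    _ = #((V \ U).powersetCard (k - #U)) := by
        rw [card_powersetCard, card_sdiff_of_subset hUV]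
        congr 1
        omega
    _ = #(((V \ U).powersetCard (k - #U)).image (U ∪ ·)) := (card_image_of_injOn hunion).symm
    _ ≤ _ := card_le_card himage

theorem Finset.exists_injective_powersetCard_superset {ι : Type*} [Fintype ι] {V : Finset α}
    {k : ℕ} (U : ι → Finset α) (hU : Function.Injective U) (hUV : ∀ i, U i ⊆ V)
    (hUk : ∀ i, #(U i) ≤ k) (hcard : Fintype.card ι + k ≤ #V + 1) :
    ∃ K : ι → Finset α, Function.Injective K ∧ ∀ i, K i ∈ V.powersetCard k ∧ U i ⊆ K i := by
  let T : ι → Finset (Finset α) := fun i => {K ∈ V.powersetCard k | U i ⊆ K}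
  have hall : ∀ s : Finset ι, #s ≤ #(s.biUnion T) := by
    intro s
    by_cases hsmall : ∃ i ∈ s, #(U i) < k
    · obtain ⟨i, hi, hUi⟩ := hsmall
      calc #s ≤ Fintype.card ι := card_le_univ s
        _ ≤ #V + 1 - k := by omega
        _ ≤ #(T i) := card_add_one_sub_le_card_supersets (hUV i) hUi
        _ ≤ #(s.biUnion T) := card_le_card (subset_biUnion_of_mem T hi)
    · push Not at hsmall
      calc #s = #(s.image U) := (card_image_of_injective s hU).symm
        _ ≤ #(s.biUnion T) := card_le_card fun K hK => by
          obtain ⟨i, hi, rfl⟩ := mem_image.mp hK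
          have hUi : #(U i) = k := le_antisymm (hUk i) (hsmall i hi)
          exact mem_biUnion.mpr
            ⟨i, hi, mem_filter.mpr ⟨mem_powersetCard.mpr ⟨hUV i, hUi⟩, subset_rfl⟩⟩
  obtain ⟨K, hKinj, hKT⟩ := (all_card_le_biUnion_card_iff_exists_injective T).mp hall
  exact ⟨K, hKinj, fun i => mem_filter.mp (hKT i)⟩

end Supersets

namespace IsStar

variable {m j : ℕ} {M J : Finset ℕ} {S : Finset (Finset ℕ)}

theorem card_union_add_le (hS : IsStar m j M S) {J' : Finset ℕ} (hJ' : J' ∈ S) (hJ : #J = j)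
    (hMJ : M ⊆ J) : #(J' ∪ J) + m ≤ 2 * j := by
  obtain ⟨hMcard, hSJ, -⟩ := hS
  have hinter : m ≤ #(J' ∩ J) := hMcard ▸ card_le_card (subset_inter (hSJ J' hJ').2 hMJ)
  have := card_union_add_card_inter J' J
  have := (hSJ J' hJ').1
  omega

theorem injOn_union (hS : IsStar m j M S) (hJ : #J = j) (hMJ : M ⊆ J) :
    Set.InjOn (· ∪ J) (S : Set (Finset ℕ)) := by
  obtain ⟨-, hSJ, hSinter⟩ := hS
  intro A hA B hB hAB
  by_contra hne
  -- a petal whose union with `J` equals another one's lies inside `J`, and so equals `J`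
  have eq_of_union_eq : ∀ X ∈ S, ∀ Y ∈ S, X ≠ Y → X ∪ J = Y ∪ J → X = J := by
    intro X hX Y hY hXY hU
    refine eq_of_subset_of_card_le (fun x hx => ?_) (by rw [(hSJ X hX).1, hJ])
    rcases mem_union.mp (hU ▸ mem_union_left J hx : x ∈ Y ∪ J) with hy | hJx
    · exact hMJ (hSinter X hX Y hY hXY ▸ mem_inter.mpr ⟨hx, hy⟩)
    · exact hJx
  exact hne ((eq_of_union_eq A hA B hB hne hAB).trans
    (eq_of_union_eq B hB A hA (Ne.symm hne) hAB.symm).symm)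

end IsStar

theorem compProc_succ (V : Finset ℕ) (k j r : ℕ) (A0 : Finset (Finset ℕ)) (t : ℕ) :
    compProc V k j r A0 (t + 1) =
      bootStep V (V.powersetCard k) j r (compProc V k j r A0 t) :=
  Function.iterate_succ_apply' _ _ _

theorem mem_bootStep {V : Finset ℕ} {E A : Finset (Finset ℕ)} {j r : ℕ} {J : Finset ℕ}
    (hJ : J ∈ V.powersetCard j) (K Js : Fin r → Finset ℕ) (hK : Function.Injective K)
    (hJs : Function.Injective Js) (h : ∀ i, K i ∈ E ∧ Js i ∈ A ∧ Js i ∪ J ⊆ K i) :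
    J ∈ bootStep V E j r A := by
  classical
  exact mem_union_right _ (mem_filter.mpr ⟨hJ, K, Js, hK, hJs, h⟩)

theorem stmt4_general (n k j r m t : ℕ)
    (hm1 : 2 * j ≤ k + m) (hn : k + r - 1 ≤ n)
    (M : Finset ℕ) (S : Finset (Finset ℕ)) (hSsub : ∀ J ∈ S, J ⊆ range n)
    (hstar : IsStar m j M S) (hsize : S.card = r)
    (A0 : Finset (Finset ℕ))
    (hinf : S ⊆ compProc (range n) k j r A0 t) :
    ∀ J ∈ (range n).powersetCard j, M ⊆ J → J ∈ compProc (range n) k j r A0 (t + 1) := by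
  intro J hJ hMJ
  obtain ⟨hJV, hJcard⟩ := mem_powersetCard.mp hJ
  let e : Fin r ≃ S := (S.equivFin.trans (finCongr hsize)).symm
  have he : Function.Injective (fun i => (e i : Finset ℕ)) :=
    Subtype.val_injective.comp e.injective
  obtain ⟨K, hKinj, hK⟩ := exists_injective_powersetCard_superset (V := range n) (k := k)
    (fun i => (e i : Finset ℕ) ∪ J)
    (fun a b hab => he (hstar.injOn_union hJcard hMJ (e a).2 (e b).2 hab))
    (fun i => union_subset (hSsub _ (e i).2) hJV)
    (fun i => by have := hstar.card_union_add_le (e i).2 hJcard hMJ; omega)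
    (by simp only [Fintype.card_fin, card_range]; omega)
  rw [compProc_succ]
  exact mem_bootStep hJ K _ hKinj he fun i => ⟨(hK i).1, hinf (e i).2, (hK i).2⟩

theorem stmt4 (n k j r m t : ℕ) (hj : 1 ≤ j) (hjk : j ≤ k - 1) (hr : 1 ≤ r)
    (hm1 : 2 * j ≤ k + m) (hm2 : m ≤ j - 1) (hn : k + r - 1 ≤ n)
    (M : Finset ℕ) (S : Finset (Finset ℕ)) (hSsub : ∀ J ∈ S, J ⊆ range n)
    (hstar : IsStar m j M S) (hsize : S.card = r)
    (A0 : Finset (Finset ℕ)) (hA0 : A0 ⊆ (range n).powersetCard j)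
    (hinf : S ⊆ compProc (range n) k j r A0 t) :
    ∀ J ∈ (range n).powersetCard j, M ⊆ J → J ∈ compProc (range n) k j r A0 (t + 1) :=
  stmt4_general n k j r m t hm1 hn M S hSsub hstar hsize A0 hinf
end

section
/- Let Z_r be as above with centres v_1,…,v_r, and suppose A_0 ⊇ Z_r in the pair bootstrap percolation process on K_n^3 with threshold r (n large enough). Then there exists a time T such that all of v_1,…,v_r are jokers at time T, i.e., every pair containing some v_i is in A_T. -/
open Finset

/-- The configuration Z_r: r vertex-disjoint stars of pairs with centres v i and
leaf sets L i of sizes ceil((i+1)/2) for i = 0,...,r-1. -/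
def IsZConfig (n r : ℕ) (v : Fin r → ℕ) (Z : Finset (Finset ℕ)) : Prop :=
  ∃ L : Fin r → Finset ℕ,
    (∀ i, L i ⊆ range n ∧ v i ∈ range n ∧ v i ∉ L i ∧ (L i).card = (i.val + 2) / 2) ∧
    (∀ i i', i ≠ i' → Disjoint (insert (v i) (L i)) (insert (v i') (L i'))) ∧
    Z = Finset.univ.biUnion (fun i => (L i).image (fun u => {v i, u}))

lemma subset_bootStep (V : Finset ℕ) (E : Finset (Finset ℕ)) (j r : ℕ)
    (A : Finset (Finset ℕ)) : A ⊆ bootStep V E j r A :=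
  subset_union_left

lemma bootProc_succ (V : Finset ℕ) (E : Finset (Finset ℕ)) (j r : ℕ)
    (A0 : Finset (Finset ℕ)) (t : ℕ) :
    bootProc V E j r A0 (t + 1) = bootStep V E j r (bootProc V E j r A0 t) :=
  Function.iterate_succ_apply' _ _ _

lemma bootProc_mono (V : Finset ℕ) (E : Finset (Finset ℕ)) (j r : ℕ)
    (A0 : Finset (Finset ℕ)) : Monotone (bootProc V E j r A0) :=
  monotone_nat_of_le_succ fun t => by
    rw [bootProc_succ]; exact subset_bootStep _ _ _ _ _

lemma infect_step (V : Finset ℕ) (r : ℕ) (A : Finset (Finset ℕ)) (J : Finset ℕ)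
    (hJ : J ∈ V.powersetCard 2) (W : Finset ℕ) (hWV : W ⊆ V) (hWcard : r ≤ W.card)
    (P : ℕ → Finset ℕ)
    (hP : ∀ w ∈ W, w ∉ J ∧ w ∈ P w ∧ P w ⊆ insert w J ∧ P w ∈ A) :
    J ∈ bootStep V (V.powersetCard 3) 2 r A := by
  classical
  obtain ⟨W', hW'sub, hW'card⟩ := exists_subset_card_eq hWcard
  have hJV : J ⊆ V := (mem_powersetCard.mp hJ).1
  have hJ2 : J.card = 2 := (mem_powersetCard.mp hJ).2
  have hcard : Fintype.card {x // x ∈ W'} = r := by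
    rw [Fintype.card_coe, hW'card]
  let e : {x // x ∈ W'} ≃ Fin r := Fintype.equivFinOfCardEq hcard
  let f : Fin r → ℕ := fun m => ((e.symm m : {x // x ∈ W'}) : ℕ)
  have hfW : ∀ m, f m ∈ W := fun m => hW'sub (e.symm m).2
  have hfinj : Function.Injective f := fun a b h => by
    apply e.symm.injective; exact Subtype.ext h
  refine mem_union_right _ (mem_filter.mpr ⟨hJ, ?_⟩)
  refine ⟨fun m => insert (f m) J, fun m => P (f m), ?_, ?_, ?_⟩
  · intro a b h
    apply hfinj
    have h' : insert (f a) J = insert (f b) J := h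
    have h1 : f a ∈ insert (f b) J := h' ▸ mem_insert_self (f a) J
    rcases mem_insert.mp h1 with h1 | h1
    · exact h1
    · exact absurd h1 (hP _ (hfW a)).1
  · intro a b h
    apply hfinj
    obtain ⟨_, _, hsub, _⟩ := hP _ (hfW a)
    obtain ⟨hb0, hmb, _, _⟩ := hP _ (hfW b)
    have h' : P (f a) = P (f b) := h
    have : f b ∈ insert (f a) J := hsub (by rw [h']; exact hmb)
    rcases mem_insert.mp this with h1 | h1
    · exact h1.symm
    · exact absurd h1 hb0
  · intro m
    obtain ⟨hnm, _, hsub, hA⟩ := hP _ (hfW m)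
    refine ⟨?_, hA, ?_⟩
    · rw [mem_powersetCard]
      exact ⟨insert_subset (hWV (hfW m)) hJV,
        by rw [card_insert_of_notMem hnm, hJ2]⟩
    · exact union_subset hsub (subset_insert _ _)

theorem stmt12 (r : ℕ) (hr : 1 ≤ r) :
    ∃ n0, ∀ n ≥ n0, ∀ (v : Fin r → ℕ) (Z A0 : Finset (Finset ℕ)),
      IsZConfig n r v Z → A0 ⊆ (range n).powersetCard 2 → Z ⊆ A0 →
      ∃ T, ∀ i : Fin r, ∀ P ∈ (range n).powersetCard 2, v i ∈ P →
        P ∈ compProc (range n) 3 2 r A0 T := by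
  classical
  refine ⟨0, fun n _ v Z A0 hZcfg hA0pow hZA0 => ?_⟩
  obtain ⟨L, hL, hdisj, hZeq⟩ := hZcfg
  set V : Finset ℕ := range n with hV
  set A : ℕ → Finset (Finset ℕ) := compProc V 3 2 r A0 with hA
  have hAsucc : ∀ t, A (t + 1) = bootStep V (V.powersetCard 3) 2 r (A t) :=
    fun t => bootProc_succ _ _ _ _ _ _
  have hAmono : ∀ s t, s ≤ t → A s ⊆ A t := fun s t h => bootProc_mono _ _ _ _ _ h
  have hA0' : A 0 = A0 := rfl
  have vinj : Function.Injective v := by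
    intro a b hab
    by_contra hne
    exact (Finset.disjoint_left.mp (hdisj a b hne) (mem_insert_self _ _))
      (hab ▸ mem_insert_self _ _)
  have vL : ∀ k i : Fin r, v k ∉ L i := by
    intro k i hmem
    by_cases hki : k = i
    · exact (hL i).2.2.1 (hki ▸ hmem)
    · exact (Finset.disjoint_left.mp (hdisj k i hki) (mem_insert_self _ _))
        (mem_insert_of_mem hmem)
  have hvV : ∀ i, v i ∈ V := fun i => (hL i).2.1
  have hLV : ∀ i, L i ⊆ V := fun i => (hL i).1
  have hLcard : ∀ i, (L i).card = (i.val + 2) / 2 := fun i => (hL i).2.2.2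
  have Zmem : ∀ i, ∀ u ∈ L i, ({v i, u} : Finset ℕ) ∈ A0 := by
    intro i u hu
    apply hZA0
    rw [hZeq]
    exact mem_biUnion.mpr ⟨i, mem_univ i, mem_image.mpr ⟨u, hu, rfl⟩⟩
  have pairPow : ∀ a b : ℕ, a ∈ V → b ∈ V → a ≠ b →
      ({a, b} : Finset ℕ) ∈ V.powersetCard 2 := by
    intro a b ha hb hab
    rw [mem_powersetCard]
    exact ⟨insert_subset ha (singleton_subset_iff.mpr hb), card_pair hab⟩
  have LLdisj : ∀ i j : Fin r, i ≠ j → Disjoint (L i) (L j) := fun i j hij =>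
    ((hdisj i j hij).mono (subset_insert _ _) (subset_insert _ _))
  -- Stage 1: all pairs of centres get infected
  have key : ∀ d : ℕ, ∀ i j : Fin r, j < i → 2 * r ≤ i.val + j.val + d + 2 →
      ({v i, v j} : Finset ℕ) ∈ A d := by
    intro d
    induction d with
    | zero =>
      intro i j hji hsum
      exfalso
      have h1 : i.val < r := i.isLt
      have h2 : j.val < i.val := hji
      omega
    | succ d ih =>
      intro i j hji hsum
      rw [hAsucc]
      have hij : i ≠ j := hji.ne'
      set S : Finset (Fin r) := (Finset.Ioi j).erase i with hS
      set W : Finset ℕ := (L i ∪ L j) ∪ S.image v with hW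
      have hiIoi : i ∈ Finset.Ioi j := mem_Ioi.mpr hji
      have hScard : S.card = r - 1 - j.val - 1 := by
        rw [hS, card_erase_of_mem hiIoi, Fin.card_Ioi]
      have hd1 : Disjoint (L i) (L j) := LLdisj i j hij
      have hd2 : Disjoint (L i ∪ L j) (S.image v) := by
        rw [Finset.disjoint_right]
        intro w hw
        obtain ⟨k, _, rfl⟩ := mem_image.mp hw
        simp only [mem_union]
        push_neg
        exact ⟨vL k i, vL k j⟩
      have hWcard : r ≤ W.card := by
        rw [hW, card_union_of_disjoint hd2, card_union_of_disjoint hd1,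
          card_image_of_injective _ vinj, hScard, hLcard, hLcard]
        have h1 : i.val < r := i.isLt
        have h2 : j.val < i.val := hji
        omega
      have hWV : W ⊆ V := by
        rw [hW]
        refine union_subset (union_subset (hLV i) (hLV j)) ?_
        intro w hw
        obtain ⟨k, _, rfl⟩ := mem_image.mp hw
        exact hvV k
      apply infect_step V r (A d) _ (pairPow _ _ (hvV i) (hvV j) (fun h => hij (vinj h)))
        W hWV hWcard (fun w => if w ∈ L j then {v j, w} else {v i, w})
      intro w hw
      rcases mem_union.mp hw with hw1 | hw2
      · rcases mem_union.mp hw1 with hLi | hLj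
        · have hwLj : w ∉ L j := Finset.disjoint_left.mp hd1 hLi
          rw [if_neg hwLj]
          refine ⟨?_, mem_insert_of_mem (mem_singleton_self w), ?_, ?_⟩
          · intro hwJ
            rcases mem_insert.mp hwJ with h | h
            · exact (hL i).2.2.1 (h ▸ hLi)
            · exact vL j i ((mem_singleton.mp h) ▸ hLi)
          · intro y hy
            rcases mem_insert.mp hy with h | h
            · exact h ▸ mem_insert_of_mem (mem_insert_self _ _)
            · exact (mem_singleton.mp h) ▸ mem_insert_self _ _
          · exact hAmono 0 d (Nat.zero_le d) (Zmem i w hLi)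
        · rw [if_pos hLj]
          refine ⟨?_, mem_insert_of_mem (mem_singleton_self w), ?_, ?_⟩
          · intro hwJ
            rcases mem_insert.mp hwJ with h | h
            · exact vL i j (h ▸ hLj)
            · exact (hL j).2.2.1 ((mem_singleton.mp h) ▸ hLj)
          · intro y hy
            rcases mem_insert.mp hy with h | h
            · exact h ▸ mem_insert_of_mem (mem_insert_of_mem (mem_singleton_self _))
            · exact (mem_singleton.mp h) ▸ mem_insert_self _ _
          · exact hAmono 0 d (Nat.zero_le d) (Zmem j w hLj)
      · obtain ⟨k, hkS, rfl⟩ := mem_image.mp hw2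
        have hki : k ≠ i := ne_of_mem_erase hkS
        have hjk : j < k := mem_Ioi.mp (mem_of_mem_erase hkS)
        have hvkLj : v k ∉ L j := vL k j
        rw [if_neg hvkLj]
        refine ⟨?_, mem_insert_of_mem (mem_singleton_self _), ?_, ?_⟩
        · intro hwJ
          rcases mem_insert.mp hwJ with h | h
          · exact hki (vinj h)
          · exact hjk.ne' (vinj (mem_singleton.mp h))
        · intro y hy
          rcases mem_insert.mp hy with h | h
          · exact h ▸ mem_insert_of_mem (mem_insert_self _ _)
          · exact (mem_singleton.mp h) ▸ mem_insert_self _ _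
        · rcases lt_or_gt_of_ne hki with hlt | hgt
          · exact ih i k hlt (by have := hjk; have h2 : j.val < k.val := hjk; omega)
          · rw [Finset.pair_comm]
            exact ih k i hgt (by have h2 : j.val < k.val := hjk; omega)
  have key2 : ∀ i j : Fin r, i ≠ j → ({v i, v j} : Finset ℕ) ∈ A (2 * r) := by
    intro i j hij
    rcases lt_or_gt_of_ne hij with h | h
    · rw [Finset.pair_comm]
      exact key (2 * r) j i h (by omega)
    · exact key (2 * r) i j h (by omega)
  -- Stage 2
  refine ⟨2 * r + 1, fun i P hPpow hvP => ?_⟩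
  obtain ⟨a, b, hab, hPab⟩ := Finset.card_eq_two.mp (mem_powersetCard.mp hPpow).2
  have hPsub : P ⊆ V := (mem_powersetCard.mp hPpow).1
  -- write P = {v i, x}
  obtain ⟨x, hxne, hPx⟩ : ∃ x, x ≠ v i ∧ P = {v i, x} := by
    rw [hPab] at hvP
    rcases mem_insert.mp hvP with h | h
    · exact ⟨b, fun hb => hab (h ▸ hb.symm), by rw [hPab, h]⟩
    · have h' : v i = b := mem_singleton.mp h
      exact ⟨a, fun ha => hab (ha ▸ h'.symm ▸ rfl), by rw [hPab, h', Finset.pair_comm]⟩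
  have hxV : x ∈ V := hPsub (hPx ▸ mem_insert_of_mem (mem_singleton_self x))
  subst hPx
  by_cases hxL : x ∈ L i
  · exact hAmono 0 (2 * r + 1) (Nat.zero_le _) (Zmem i x hxL)
  by_cases hxv : ∃ k, x = v k
  · obtain ⟨k, rfl⟩ := hxv
    have hki : k ≠ i := fun h => hxne (by rw [h])
    exact hAmono (2 * r) (2 * r + 1) (Nat.le_succ _) (key2 i k (fun h => hki h.symm))
  · push_neg at hxv
    rw [hAsucc]
    set W : Finset ℕ := L i ∪ (univ.erase i).image v with hW
    have hdisjW : Disjoint (L i) ((univ.erase i).image v) := by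
      rw [Finset.disjoint_right]
      intro w hw
      obtain ⟨k, _, rfl⟩ := mem_image.mp hw
      exact vL k i
    have hWcard : r ≤ W.card := by
      rw [hW, card_union_of_disjoint hdisjW, card_image_of_injective _ vinj,
        card_erase_of_mem (mem_univ i), card_univ, Fintype.card_fin, hLcard]
      omega
    have hWV : W ⊆ V := by
      rw [hW]
      refine union_subset (hLV i) ?_
      intro w hw
      obtain ⟨k, _, rfl⟩ := mem_image.mp hw
      exact hvV k
    apply infect_step V r (A (2 * r)) _ hPpow W hWV hWcard (fun w => {v i, w})
    intro w hw
    have hwne : w ≠ v i ∧ w ≠ x := by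
      rcases mem_union.mp hw with h | h
      · exact ⟨fun he => (hL i).2.2.1 (he ▸ h), fun he => hxL (he ▸ h)⟩
      · obtain ⟨k, hk, rfl⟩ := mem_image.mp h
        exact ⟨fun he => (ne_of_mem_erase hk) (vinj he), fun he => hxv k he.symm⟩
    refine ⟨?_, mem_insert_of_mem (mem_singleton_self w), ?_, ?_⟩
    · intro hwJ
      rcases mem_insert.mp hwJ with h | h
      · exact hwne.1 h
      · exact hwne.2 (mem_singleton.mp h)
    · intro y hy
      rcases mem_insert.mp hy with h | h
      · exact h ▸ mem_insert_of_mem (mem_insert_self _ _)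
      · exact (mem_singleton.mp h) ▸ mem_insert_self _ _
    · rcases mem_union.mp hw with h | h
      · exact hAmono 0 (2 * r) (Nat.zero_le _) (Zmem i w h)
      · obtain ⟨k, hk, rfl⟩ := mem_image.mp h
        exact key2 i k (fun he => (ne_of_mem_erase hk) he.symm)
end

section
/- Coupling under augmentation: let v be a vertex, C_0 a (j−1)-configuration on [n] \ {v}, and C_0' a j-configuration on [n]. Let C_t be the infected sets of the (r, C_0)-process on the complete (k−1)-uniform hypergraph on [n] \ {v}, and C_t' those of the (r, C_0')-process on K_n^k, where j = k−1. If (C_0)_v ⊆ C_0' then (C_t)_v ⊆ C_t' for all t, where (C)_v denotes the configuration obtained by adding v to every set of C. -/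
open Finset

open Classical

lemma bootProc_subset (V : Finset ℕ) (E : Finset (Finset ℕ)) (j r : ℕ)
    (A0 : Finset (Finset ℕ)) (h : A0 ⊆ V.powersetCard j) (t : ℕ) :
    bootProc V E j r A0 t ⊆ V.powersetCard j := by
  induction t with
  | zero => exact h
  | succ t ih =>
    rw [bootProc, Function.iterate_succ_apply']
    exact Finset.union_subset ih (Finset.filter_subset _ _)

lemma step_coupling (n k r : ℕ) (hk : 3 ≤ k) (v : ℕ) (hv : v ∈ range n)
    (C C' : Finset (Finset ℕ))
    (hC : C ⊆ ((range n).erase v).powersetCard (k - 2))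
    (h : C.image (insert v) ⊆ C') :
    (bootStep ((range n).erase v) (((range n).erase v).powersetCard (k-1)) (k-2) r C).image (insert v)
      ⊆ bootStep (range n) ((range n).powersetCard k) (k-1) r C' := by
  intro J' hJ'
  obtain ⟨J, hJ, rfl⟩ := Finset.mem_image.mp hJ'
  rw [bootStep, Finset.mem_union] at hJ
  rcases hJ with hJ | hJ
  · exact Finset.mem_union_left _ (h (Finset.mem_image_of_mem _ hJ))
  · rw [Finset.mem_filter] at hJ
    obtain ⟨hJmem, K, Js, hKinj, hJsinj, hall⟩ := hJ
    rw [Finset.mem_powersetCard] at hJmem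
    obtain ⟨hJsubV, hJcard⟩ := hJmem
    have hvJ : v ∉ J := fun hvJ => (Finset.mem_erase.mp (hJsubV hvJ)).1 rfl
    have hins : insert v J ∈ (range n).powersetCard (k-1) := by
      rw [Finset.mem_powersetCard]
      constructor
      · exact Finset.insert_subset hv (hJsubV.trans (Finset.erase_subset _ _))
      · rw [Finset.card_insert_of_notMem hvJ, hJcard]; omega
    apply Finset.mem_union_right
    rw [Finset.mem_filter]
    refine ⟨hins, fun i => insert v (K i), fun i => insert v (Js i), ?_, ?_, ?_⟩
    · intro a b hab
      have hva : v ∉ K a := fun hh =>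
        (Finset.mem_erase.mp ((Finset.mem_powersetCard.mp (hall a).1).1 hh)).1 rfl
      have hvb : v ∉ K b := fun hh =>
        (Finset.mem_erase.mp ((Finset.mem_powersetCard.mp (hall b).1).1 hh)).1 rfl
      apply hKinj
      have := congrArg (·.erase v) hab
      simpa [Finset.erase_insert hva, Finset.erase_insert hvb] using this
    · intro a b hab
      have hva : v ∉ Js a := fun hh =>
        (Finset.mem_erase.mp ((Finset.mem_powersetCard.mp (hC (hall a).2.1)).1 hh)).1 rfl
      have hvb : v ∉ Js b := fun hh =>
        (Finset.mem_erase.mp ((Finset.mem_powersetCard.mp (hC (hall b).2.1)).1 hh)).1 rfl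
      apply hJsinj
      have := congrArg (·.erase v) hab
      simpa [Finset.erase_insert hva, Finset.erase_insert hvb] using this
    · intro i
      obtain ⟨hKi, hJsi, hsub⟩ := hall i
      rw [Finset.mem_powersetCard] at hKi
      have hvK : v ∉ K i := fun hh => (Finset.mem_erase.mp (hKi.1 hh)).1 rfl
      refine ⟨?_, h (Finset.mem_image_of_mem _ hJsi), ?_⟩
      · rw [Finset.mem_powersetCard]
        exact ⟨Finset.insert_subset hv (hKi.1.trans (Finset.erase_subset _ _)),
          by rw [Finset.card_insert_of_notMem hvK, hKi.2]; omega⟩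
      · exact Finset.union_subset
          (Finset.insert_subset_insert _ (Finset.subset_union_left.trans hsub))
          (Finset.insert_subset_insert _ (Finset.subset_union_right.trans hsub))

theorem stmt16 (n k r : ℕ) (hk : 3 ≤ k) (v : ℕ) (hv : v ∈ range n)
    (C0 C0' : Finset (Finset ℕ))
    (hC0 : C0 ⊆ ((range n).erase v).powersetCard (k - 2))
    (hC0' : C0' ⊆ (range n).powersetCard (k - 1))
    (haug : C0.image (insert v) ⊆ C0') :
    ∀ t, (compProc ((range n).erase v) (k - 1) (k - 2) r C0 t).image (insert v) ⊆
      compProc (range n) k (k - 1) r C0' t := by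
  intro t
  induction t with
  | zero => simpa [compProc, bootProc] using haug
  | succ t ih =>
    have hsub := bootProc_subset ((range n).erase v) (((range n).erase v).powersetCard (k-1))
      (k-2) r C0 hC0 t
    have := step_coupling n k r hk v hv _ _ hsub ih
    simpa [compProc, bootProc, Function.iterate_succ_apply'] using this
end
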